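/- arXiv:2401.13431 — 2 statements merged into one kernel-verified Lean document; each statement's English description precedes it below -/
import Mathlib

section
/- Each of the five vectors l₁ = (1,0,1,1,1), l₂ = (0,1,0,1,1), l₃ = (0,0,1,1,1), l₄ = (0,0,0,−1,1), l₅ = (1,1,0,3,1) in ℝ^5 spans an extremal ray of the convex cone C generated by {l₁,…,l₅}; i.e., for each i, lᵢ is not a nonnegative linear combination of the other four vectors. -/
open Finset

/-- The convex cone generated by a set: all finite nonnegative linear combinations. -/
def coneGen {V : Type*} [AddCommGroup V] [Module ℝ V] (S : Set V) : Set V :=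
  {x | ∃ (n : ℕ) (c : Fin n → ℝ) (v : Fin n → V),
    (∀ i, 0 ≤ c i) ∧ (∀ i, v i ∈ S) ∧ x = ∑ i, c i • v i}

/-- A cone is salient if it contains no line. -/
def IsSalient {V : Type*} [AddCommGroup V] [Module ℝ V] (C : Set V) : Prop :=
  ∀ x ∈ C, -x ∈ C → x = 0

/-- A nonzero vector spans an extremal ray of the cone `C`. -/
def IsExtremalVec {V : Type*} [AddCommGroup V] [Module ℝ V] (C : Set V) (v : V) : Prop :=
  v ≠ 0 ∧ v ∈ C ∧ ∀ x y, x ∈ C → y ∈ C → v = x + y →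
    (∃ a : ℝ, 0 ≤ a ∧ x = a • v) ∧ (∃ b : ℝ, 0 ≤ b ∧ y = b • v)

def L5 : Fin 5 → (Fin 5 → ℝ) :=
  ![![1, 0, 1, 1, 1],
    ![0, 1, 0, 1, 1],
    ![0, 0, 1, 1, 1],
    ![0, 0, 0, -1, 1],
    ![1, 1, 0, 3, 1]]

/-!
Each `L5 i` is exposed: for each `i` there is a linear form `φ` (a row of `L5Cert`) with
`φ (L5 i) = 0` and `φ (L5 j) > 0` for `j ≠ i`. Then `φ ≥ 0` on the cone, so a decomposition
`L5 i = x + y` inside the cone forces `φ x = φ y = 0`, and a nonnegative combination on which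
`φ` vanishes can only use `L5 i`.
-/

section ExposedRay

variable {V : Type*} [AddCommGroup V] [Module ℝ V] {φ : V →ₗ[ℝ] ℝ}

lemma map_sum_smul_nonneg {ι : Type*} [Fintype ι] {c : ι → ℝ} {w : ι → V}
    (hc : ∀ k, 0 ≤ c k) (hw : ∀ k, 0 ≤ φ (w k)) : 0 ≤ φ (∑ k, c k • w k) := by
  simp only [map_sum, map_smul, smul_eq_mul]
  exact Finset.sum_nonneg fun k _ => mul_nonneg (hc k) (hw k)

lemma eq_zero_of_map_sum_smul_eq_zero {ι : Type*} [Fintype ι] {c : ι → ℝ} {w : ι → V}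
    (hc : ∀ k, 0 ≤ c k) (hw : ∀ k, 0 ≤ φ (w k)) (h : φ (∑ k, c k • w k) = 0) {k : ι}
    (hk : 0 < φ (w k)) : c k = 0 := by
  simp only [map_sum, map_smul, smul_eq_mul] at h
  have hterm := (Finset.sum_eq_zero_iff_of_nonneg fun k _ => mul_nonneg (hc k) (hw k)).mp h k
    (Finset.mem_univ k)
  exact (mul_eq_zero.mp hterm).resolve_right hk.ne'

lemma self_mem_coneGen {S : Set V} {v : V} (hv : v ∈ S) : v ∈ coneGen S :=
  ⟨1, fun _ => 1, fun _ => v, fun _ => zero_le_one, fun _ => hv, by simp⟩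

lemma map_nonneg_of_mem_coneGen {S : Set V} (hS : ∀ s ∈ S, 0 ≤ φ s) {x : V}
    (hx : x ∈ coneGen S) : 0 ≤ φ x := by
  obtain ⟨n, c, w, hc, hw, rfl⟩ := hx
  exact map_sum_smul_nonneg hc fun k => hS _ (hw k)

variable {S : Set V} {v : V}

lemma map_nonneg_of_exposed (hv : φ v = 0) (hpos : ∀ s ∈ S, s ≠ v → 0 < φ s) :
    ∀ s ∈ S, 0 ≤ φ s := fun s hs =>
  (eq_or_ne s v).elim (fun h => h ▸ hv.ge) fun h => (hpos s hs h).le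

lemma exists_nonneg_smul_of_mem_coneGen_of_map_eq_zero (hv : φ v = 0)
    (hpos : ∀ s ∈ S, s ≠ v → 0 < φ s) {x : V} (hx : x ∈ coneGen S) (hφx : φ x = 0) :
    ∃ a : ℝ, 0 ≤ a ∧ x = a • v := by
  classical
  obtain ⟨n, c, w, hc, hw, rfl⟩ := hx
  have hS := map_nonneg_of_exposed hv hpos
  have hterm : ∀ k, c k • w k = (if w k = v then c k else 0) • v := by
    intro k
    split_ifs with h
    · rw [h]
    · rw [eq_zero_of_map_sum_smul_eq_zero hc (fun k => hS _ (hw k)) hφx (hpos _ (hw k) h),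
        zero_smul, zero_smul]
  refine ⟨∑ k, if w k = v then c k else 0, Finset.sum_nonneg fun k _ => ?_, ?_⟩
  · split_ifs
    exacts [hc k, le_rfl]
  · rw [Finset.sum_smul]
    exact Finset.sum_congr rfl fun k _ => hterm k

theorem isExtremalVec_coneGen_of_exposed (hv : φ v = 0) (hpos : ∀ s ∈ S, s ≠ v → 0 < φ s)
    (hvS : v ∈ S) (hv0 : v ≠ 0) : IsExtremalVec (coneGen S) v := by
  refine ⟨hv0, self_mem_coneGen hvS, fun x y hx hy hxy => ?_⟩
  have hS := map_nonneg_of_exposed hv hpos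
  have hx0 := map_nonneg_of_mem_coneGen hS hx
  have hy0 := map_nonneg_of_mem_coneGen hS hy
  have hsum : φ x + φ y = 0 := by rw [← map_add, ← hxy, hv]
  exact ⟨exists_nonneg_smul_of_mem_coneGen_of_map_eq_zero hv hpos hx (by linarith),
    exists_nonneg_smul_of_mem_coneGen_of_map_eq_zero hv hpos hy (by linarith)⟩

theorem isExtremalVec_coneGen_range_of_exposed {ι : Type*} {L : ι → V} {i : ι}
    (hv : φ (L i) = 0) (hpos : ∀ j ≠ i, 0 < φ (L j)) (hL : L i ≠ 0) :
    IsExtremalVec (coneGen (Set.range L)) (L i) := by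
  refine isExtremalVec_coneGen_of_exposed hv ?_ ⟨i, rfl⟩ hL
  rintro _ ⟨j, rfl⟩ hj
  exact hpos j (by rintro rfl; exact hj rfl)

theorem not_exists_nonneg_combination_of_exposed {ι : Type*} [Fintype ι] {L : ι → V} {i : ι}
    (hv : φ (L i) = 0) (hpos : ∀ j ≠ i, 0 < φ (L j)) (hL : L i ≠ 0) :
    ¬ ∃ c : ι → ℝ, (∀ j, 0 ≤ c j) ∧ c i = 0 ∧ L i = ∑ j, c j • L j := by
  rintro ⟨c, hc, hci, hrep⟩
  have hL0 : ∀ j, 0 ≤ φ (L j) := fun j =>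
    (eq_or_ne j i).elim (fun h => h ▸ hv.ge) fun h => (hpos j h).le
  have hc0 : ∀ j, c j = 0 := fun j => (eq_or_ne j i).elim (· ▸ hci) fun h =>
    eq_zero_of_map_sum_smul_eq_zero hc hL0 (hrep ▸ hv) (hpos j h)
  exact hL (by simp [hrep, hc0])

end ExposedRay

def L5Cert : Fin 5 → Fin 5 → ℝ :=
  ![![-3, -3, -2, 2, 3],
    ![-1, -3, -1, 1, 2],
    ![1, -2, -3, 0, 3],
    ![-3, -3, -2, 3, 3],
    ![-3, -3, 0, 1, 3]]

lemma L5Cert_dotProduct_self (i : Fin 5) : L5Cert i ⬝ᵥ L5 i = 0 := by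
  fin_cases i <;> norm_num [L5Cert, L5, dotProduct, Fin.sum_univ_succ]

lemma L5Cert_dotProduct_pos {i j : Fin 5} (h : j ≠ i) : 0 < L5Cert i ⬝ᵥ L5 j := by
  fin_cases i <;> fin_cases j <;>
    first | exact absurd rfl h | norm_num [L5Cert, L5, dotProduct, Fin.sum_univ_succ]

lemma L5_ne_zero (i : Fin 5) : L5 i ≠ 0 := fun h => by
  have h4 : L5 i 4 = 0 := congrFun h 4
  fin_cases i <;> simp [L5] at h4

theorem each_of_five_is_extremal :
    ∀ i : Fin 5, IsExtremalVec (coneGen (Set.range L5)) (L5 i) ∧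
      ¬ ∃ c : Fin 5 → ℝ, (∀ j, 0 ≤ c j) ∧ c i = 0 ∧ L5 i = ∑ j, c j • L5 j := by
  intro i
  let φ := dotProductBilin ℝ ℝ (L5Cert i)
  have hφi : φ (L5 i) = 0 := L5Cert_dotProduct_self i
  have hφpos : ∀ j ≠ i, 0 < φ (L5 j) := fun j => L5Cert_dotProduct_pos
  exact ⟨isExtremalVec_coneGen_range_of_exposed hφi hφpos (L5_ne_zero i),
    not_exists_nonneg_combination_of_exposed hφi hφpos (L5_ne_zero i)⟩
end

section
/- Let C ⊆ ℝ^n be a full-dimensional salient polyhedral cone and let R be the (finite) set of extremal rays of C. For each r ∈ R let φ_r : ℝ^n → ℝ^n/span(r) be the quotient map. Let L ⊆ R. If for some r ∈ L there exists an extremal ray s of the cone φ_r(C) such that no r' ∈ L satisfies φ_r(r') = s, then L ≠ R; that is, there exists an extremal ray of C not belonging to L. -/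
open Finset

section helpers
variable {V : Type*} [AddCommGroup V] [Module ℝ V] {S T : Set V} {x y : V}

lemma coneGen_zero (S : Set V) : (0 : V) ∈ coneGen S :=
  ⟨0, Fin.elim0, Fin.elim0, fun i => i.elim0, fun i => i.elim0, by simp⟩

lemma subset_coneGen : S ⊆ coneGen S := fun v hv =>
  ⟨1, fun _ => 1, fun _ => v, fun _ => zero_le_one, fun _ => hv, by simp⟩

lemma coneGen_add (hx : x ∈ coneGen S) (hy : y ∈ coneGen S) : x + y ∈ coneGen S := by
  obtain ⟨m, c, v, hc, hv, rfl⟩ := hx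
  obtain ⟨m', d, w, hd, hw, rfl⟩ := hy
  refine ⟨m + m', Fin.append c d, Fin.append v w, ?_, ?_, ?_⟩
  · intro i
    induction i using Fin.addCases with
    | left i => simpa using hc i
    | right i => simpa using hd i
  · intro i
    induction i using Fin.addCases with
    | left i => simpa using hv i
    | right i => simpa using hw i
  · rw [Fin.sum_univ_add]
    simp

lemma coneGen_smul {t : ℝ} (ht : 0 ≤ t) (hx : x ∈ coneGen S) : t • x ∈ coneGen S := by
  obtain ⟨m, c, v, hc, hv, rfl⟩ := hx
  exact ⟨m, fun i => t * c i, v, fun i => mul_nonneg ht (hc i), hv, by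
    simp [Finset.smul_sum, smul_smul]⟩

lemma coneGen_sum_mem {ι : Type*} (t : Finset ι) (f : ι → V)
    (h : ∀ i ∈ t, f i ∈ coneGen S) : ∑ i ∈ t, f i ∈ coneGen S :=
  Finset.sum_induction f (· ∈ coneGen S) (fun _ _ => coneGen_add) (coneGen_zero S) h

lemma coneGen_mono (h : S ⊆ T) : coneGen S ⊆ coneGen T := by
  rintro x ⟨m, c, v, hc, hv, rfl⟩
  exact ⟨m, c, v, hc, fun i => h (hv i), rfl⟩

lemma coneGen_subset (h : S ⊆ coneGen T) : coneGen S ⊆ coneGen T := by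
  rintro x ⟨m, c, v, hc, hv, rfl⟩
  exact coneGen_sum_mem _ _ fun i _ => coneGen_smul (hc i) (h (hv i))

lemma mem_coneGen_iff_finset :
    x ∈ coneGen S ↔ ∃ (t : Finset V) (a : V → ℝ), ↑t ⊆ S ∧ (∀ h, 0 ≤ a h) ∧
      x = ∑ h ∈ t, a h • h := by
  classical
  constructor
  · rintro ⟨m, c, v, hc, hv, rfl⟩
    refine ⟨Finset.univ.image v, fun h => ∑ i ∈ Finset.univ.filter (v · = h), c i, ?_, ?_, ?_⟩
    · intro h hh
      simp only [Finset.coe_image, Set.mem_image] at hh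
      obtain ⟨i, _, rfl⟩ := hh
      exact hv i
    · exact fun h => Finset.sum_nonneg fun i _ => hc i
    · rw [← Finset.sum_fiberwise_of_maps_to (g := v)
        (fun i _ => Finset.mem_image_of_mem v (Finset.mem_univ i)) (fun i => c i • v i)]
      refine Finset.sum_congr rfl fun h _ => ?_
      rw [Finset.sum_smul]
      refine Finset.sum_congr rfl fun i hi => ?_
      rw [(Finset.mem_filter.1 hi).2]
  · rintro ⟨t, a, hts, ha, rfl⟩
    exact coneGen_sum_mem _ _ fun h hh =>
      coneGen_smul (ha h) (subset_coneGen (hts hh))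

lemma mem_coneGen_finset_iff (H : Finset V) :
    x ∈ coneGen (↑H : Set V) ↔ ∃ a : V → ℝ, (∀ h, 0 ≤ a h) ∧ x = ∑ h ∈ H, a h • h := by
  classical
  constructor
  · intro hx
    obtain ⟨t, a, hts, ha, rfl⟩ := mem_coneGen_iff_finset.1 hx
    have htH : t ⊆ H := Finset.coe_subset.1 hts
    refine ⟨fun h => if h ∈ t then a h else 0,
      fun h => by by_cases h' : h ∈ t <;> simp [h', ha], ?_⟩
    have e1 : ∑ h ∈ t, a h • h = ∑ h ∈ t, (if h ∈ t then a h else 0) • h :=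
      Finset.sum_congr rfl fun h hh => by simp [hh]
    rw [e1]
    exact Finset.sum_subset htH (fun h _ hht => by simp [hht])
  · rintro ⟨a, ha, rfl⟩
    exact coneGen_sum_mem _ _ fun h hh =>
      coneGen_smul (ha h) (subset_coneGen hh)

end helpers

theorem criterion_failure_detects_missing_ray {n : ℕ}
    (C : Set (Fin n → ℝ)) (S : Set (Fin n → ℝ)) (hS : S.Finite)
    (hC : C = coneGen S) (hsal : IsSalient C)
    (hfull : Submodule.span ℝ C = ⊤)
    (L : Set (Fin n → ℝ)) (hL : ∀ v ∈ L, IsExtremalVec C v)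
    (r : Fin n → ℝ) (hr : r ∈ L)
    (s : (Fin n → ℝ) ⧸ Submodule.span ℝ {r})
    (hs : IsExtremalVec ((Submodule.span ℝ {r}).mkQ '' C) s)
    (hmiss : ∀ r' ∈ L, ∀ t : ℝ, 0 < t → (Submodule.span ℝ {r}).mkQ r' ≠ t • s) :
    ∃ v : Fin n → ℝ, IsExtremalVec C v ∧ ∀ w ∈ L, ∀ t : ℝ, 0 < t → w ≠ t • v := by
  classical
  subst hC
  set φ := (Submodule.span ℝ {r}).mkQ with hφdef
  set C := coneGen S with hC
  -- s ≠ 0 and a preimage of s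
  have hs0 : s ≠ 0 := hs.1
  obtain ⟨x₀, hx₀C, hx₀⟩ := hs.2.1
  -- salience of the image cone
  have hsalφ : ∀ x ∈ φ '' C, -x ∈ φ '' C → x = 0 := by
    rintro x ⟨a, ha, rfl⟩ ⟨b, hb, hbx⟩
    have h1 : s = (s + φ a) + φ b := by rw [hbx]; abel
    have hmem1 : s + φ a ∈ φ '' C := ⟨x₀ + a, coneGen_add hx₀C ha, by rw [map_add, hx₀]⟩
    obtain ⟨-, b1, hb1, e1⟩ := hs.2.2 _ _ hmem1 ⟨b, hb, rfl⟩ h1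
    have h2 : s = (s + φ b) + φ a := by rw [hbx]; abel
    have hmem2 : s + φ b ∈ φ '' C := ⟨x₀ + b, coneGen_add hx₀C hb, by rw [map_add, hx₀]⟩
    obtain ⟨-, b2, hb2, e2⟩ := hs.2.2 _ _ hmem2 ⟨a, ha, rfl⟩ h2
    have : (b1 + b2) • s = 0 := by
      rw [add_smul, ← e1, ← e2, hbx]; abel
    rcases smul_eq_zero.1 this with h | h
    · have hb1z : b1 = 0 := by linarith
      rw [e1, hb1z, zero_smul] at hbx
      rw [e2, show b2 = 0 by linarith, zero_smul]
    · exact absurd h hs0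
  -- the face F
  set F : Set (Fin n → ℝ) := {y | y ∈ C ∧ ∃ t : ℝ, 0 ≤ t ∧ φ y = t • s} with hFdef
  have hFC : F ⊆ C := fun y hy => hy.1
  have hF0 : (0 : Fin n → ℝ) ∈ F := ⟨coneGen_zero S, 0, le_refl _, by simp⟩
  have hFadd : ∀ {a b}, a ∈ F → b ∈ F → a + b ∈ F := by
    rintro a b ⟨haC, t1, ht1, e1⟩ ⟨hbC, t2, ht2, e2⟩
    exact ⟨coneGen_add haC hbC, t1 + t2, by linarith, by rw [map_add, e1, e2, add_smul]⟩
  have hFsmul : ∀ {c : ℝ} {a}, 0 ≤ c → a ∈ F → c • a ∈ F := by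
    rintro c a hc ⟨haC, t1, ht1, e1⟩
    exact ⟨coneGen_smul hc haC, c * t1, mul_nonneg hc ht1, by rw [map_smul, e1, smul_smul]⟩
  -- F is an extreme subset of C
  have hFext : ∀ y ∈ F, ∀ a b, a ∈ C → b ∈ C → y = a + b → a ∈ F ∧ b ∈ F := by
    rintro y ⟨hyC, t, ht, hyt⟩ a b ha hb rfl
    rcases eq_or_lt_of_le ht with h0 | hpos
    · have hab : φ a + φ b = 0 := by rw [← map_add, hyt, ← h0, zero_smul]
      have hA : φ a = 0 := hsalφ _ ⟨a, ha, rfl⟩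
        (⟨b, hb, by rw [eq_neg_of_add_eq_zero_left hab, neg_neg]⟩)
      have hB : φ b = 0 := by rwa [hA, zero_add] at hab
      exact ⟨⟨ha, 0, le_refl _, by simp [hA]⟩, ⟨hb, 0, le_refl _, by simp [hB]⟩⟩
    · have htne : t ≠ 0 := ne_of_gt hpos
      have h1 : s = φ (t⁻¹ • a) + φ (t⁻¹ • b) := by
        rw [map_smul, map_smul, ← smul_add, ← map_add, hyt, smul_smul,
          inv_mul_cancel₀ htne, one_smul]
      obtain ⟨⟨a1, ha1, e1⟩, ⟨b1, hb1, e2⟩⟩ := hs.2.2 _ _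
        ⟨t⁻¹ • a, coneGen_smul (le_of_lt (inv_pos.2 hpos)) ha, rfl⟩
        ⟨t⁻¹ • b, coneGen_smul (le_of_lt (inv_pos.2 hpos)) hb, rfl⟩ h1
      rw [map_smul] at e1 e2
      constructor
      · refine ⟨ha, t * a1, mul_nonneg (le_of_lt hpos) ha1, ?_⟩
        have := congrArg (t • ·) e1
        simpa [smul_smul, mul_inv_cancel₀ htne] using this
      · refine ⟨hb, t * b1, mul_nonneg (le_of_lt hpos) hb1, ?_⟩
        have := congrArg (t • ·) e2
        simpa [smul_smul, mul_inv_cancel₀ htne] using this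
  -- extremeness for finite sums
  have hFsum : ∀ (t : Finset (Fin n → ℝ)) (f : (Fin n → ℝ) → (Fin n → ℝ)),
      (∀ i ∈ t, f i ∈ C) → (∑ i ∈ t, f i) ∈ F → ∀ i ∈ t, f i ∈ F := by
    intro t
    induction t using Finset.induction with
    | empty => intro f _ _ i hi; exact absurd hi (Finset.notMem_empty i)
    | @insert j t hj ih =>
      intro f hf hsum i hi
      rw [Finset.sum_insert hj] at hsum
      have h2 := hFext _ hsum _ _ (hf j (Finset.mem_insert_self j t))
        (coneGen_sum_mem t f fun k hk => hf k (Finset.mem_insert_of_mem hk)) rfl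
      rcases Finset.mem_insert.1 hi with rfl | hi'
      · exact h2.1
      · exact ih f (fun k hk => hf k (Finset.mem_insert_of_mem hk)) h2.2 i hi'
  -- F = coneGen (S ∩ F)
  have hFgen : F = coneGen (S ∩ F) := by
    apply Set.Subset.antisymm
    · intro y hy
      obtain ⟨t, a, hts, ha, hysum⟩ := mem_coneGen_iff_finset.1 (hFC hy)
      set t' := t.filter (fun h => a h ≠ 0) with ht'
      have hsum' : y = ∑ h ∈ t', a h • h := by
        rw [hysum]
        exact (Finset.sum_subset (Finset.filter_subset _ t) (fun h _ hht => by
          simp only [ht', Finset.mem_filter, not_and, not_not] at hht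
          rcases Classical.em (h ∈ t) with h' | h'
          · rw [hht h', zero_smul]
          · exact absurd ‹h ∈ t› h' )).symm
      have hmemF : ∀ h ∈ t', a h • h ∈ F := by
        apply hFsum t' (fun h => a h • h)
        · intro h hh
          exact coneGen_smul (ha h) (subset_coneGen (hts (Finset.filter_subset _ t hh)))
        · rw [← hsum']; exact hy
      have hFh : ∀ h ∈ t', h ∈ S ∩ F := by
        intro h hh
        have hpos : 0 < a h := lt_of_le_of_ne (ha h) (Ne.symm (Finset.mem_filter.1 hh).2)
        refine ⟨hts (Finset.filter_subset _ t hh), ?_⟩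
        have := hFsmul (le_of_lt (inv_pos.2 hpos)) (hmemF h hh)
        rwa [inv_smul_smul₀ (ne_of_gt hpos)] at this
      rw [hsum']
      exact mem_coneGen_iff_finset.2 ⟨t', a, hFh, ha, rfl⟩
    · rintro x ⟨m, c, v, hc, hv, rfl⟩
      exact Finset.sum_induction _ (· ∈ F) (fun _ _ => hFadd) hF0
        (fun i _ => hFsmul (hc i) (hv i).2)
  have hx₀F : x₀ ∈ F := ⟨hx₀C, 1, zero_le_one, by rw [hx₀, one_smul]⟩
  -- minimal generating finset of F
  have hSF : (S ∩ F).Finite := hS.inter_of_left F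
  have hex : ∃ k, ∃ H : Finset (Fin n → ℝ), H.card = k ∧ ↑H ⊆ S ∩ F ∧ coneGen (↑H : Set _) = F :=
    ⟨hSF.toFinset.card, hSF.toFinset, rfl, by rw [hSF.coe_toFinset], by rw [hSF.coe_toFinset, ← hFgen]⟩
  obtain ⟨H, hHcard, hHsub, hHgen⟩ := Nat.find_spec hex
  have hmin : ∀ g ∈ H, g ∉ coneGen (↑(H.erase g) : Set _) := by
    intro g hg hmem
    have hsub' : (↑H : Set (Fin n → ℝ)) ⊆ coneGen (↑(H.erase g) : Set _) := by
      intro h hh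
      rcases eq_or_ne h g with rfl | hne
      · exact hmem
      · exact subset_coneGen (Finset.mem_coe.2 (Finset.mem_erase.2 ⟨hne, Finset.mem_coe.1 hh⟩))
    have hEq : coneGen (↑(H.erase g) : Set _) = F := by
      apply Set.Subset.antisymm
      · rw [← hHgen]
        exact coneGen_mono (fun h hh => Finset.mem_coe.2 (Finset.mem_of_mem_erase (Finset.mem_coe.1 hh)))
      · rw [← hHgen]; exact coneGen_subset hsub'
    have hlt : (H.erase g).card < Nat.find hex := by
      rw [← hHcard]; exact Finset.card_erase_lt_of_mem hg
    exact absurd (Nat.find_le ⟨H.erase g, rfl,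
      fun h hh => hHsub (Finset.mem_coe.2 (Finset.mem_of_mem_erase (Finset.mem_coe.1 hh))), hEq⟩)
      (not_le.2 hlt)
  -- a sum-of-zeros lemma from salience
  have hzero : ∀ (t : Finset (Fin n → ℝ)) (f : (Fin n → ℝ) → (Fin n → ℝ)),
      (∀ i ∈ t, f i ∈ C) → ∑ i ∈ t, f i = 0 → ∀ i ∈ t, f i = 0 := by
    intro t f hf hsum i hi
    have h1 : f i + ∑ j ∈ t.erase i, f j = 0 := by
      rw [Finset.add_sum_erase t f hi, hsum]
    have h2 : -(f i) = ∑ j ∈ t.erase i, f j := neg_eq_of_add_eq_zero_right h1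
    exact hsal _ (hf i hi)
      (h2 ▸ coneGen_sum_mem _ f (fun j hj => hf j (Finset.mem_of_mem_erase hj)))
  -- every element of H is an extremal vector of C
  have hext : ∀ g ∈ H, IsExtremalVec C g := by
    intro g hg
    have hg0 : g ≠ 0 := fun h => hmin g hg (h ▸ coneGen_zero _)
    have hgF : g ∈ F := (hHsub (Finset.mem_coe.2 hg)).2
    have hgC : g ∈ C := hgF.1
    refine ⟨hg0, hgC, ?_⟩
    intro x y hx hy hxy
    obtain ⟨hxF, hyF⟩ := hFext g hgF x y hx hy hxy
    obtain ⟨a, ha, hxa⟩ := (mem_coneGen_finset_iff H).1 (hHgen.symm ▸ hxF)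
    obtain ⟨b, hb, hyb⟩ := (mem_coneGen_finset_iff H).1 (hHgen.symm ▸ hyF)
    have hgsum : g = ∑ h ∈ H, (a h + b h) • h := by
      rw [hxy, hxa, hyb, ← Finset.sum_add_distrib]
      exact Finset.sum_congr rfl fun h _ => (add_smul (a h) (b h) h).symm
    set z := ∑ h ∈ H.erase g, (a h + b h) • h with hz
    have hzC' : z ∈ coneGen (↑(H.erase g) : Set _) :=
      coneGen_sum_mem _ _ fun h hh =>
        coneGen_smul (by linarith [ha h, hb h]) (subset_coneGen (Finset.mem_coe.2 hh))
    have hzC : z ∈ C := coneGen_mono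
      (fun h hh => (hHsub (Finset.mem_coe.2
        (Finset.mem_of_mem_erase (Finset.mem_coe.1 hh)))).1) hzC'
    have hsplit : g = (a g + b g) • g + z :=
      hgsum.trans (Finset.add_sum_erase H _ hg).symm
    have hzsub : z = g - (a g + b g) • g := by
      rw [eq_sub_iff_add_eq, add_comm]; exact hsplit.symm
    rcases lt_trichotomy (a g + b g) 1 with hlt | heq | hgt
    · exfalso
      have hzg : z = (1 - (a g + b g)) • g := by
        rw [hzsub, sub_smul, one_smul]
      have hgz : g = (1 - (a g + b g))⁻¹ • z := by
        rw [hzg, inv_smul_smul₀ (by linarith)]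
      apply hmin g hg
      have hm : (1 - (a g + b g))⁻¹ • z ∈ coneGen ↑(H.erase g) :=
        coneGen_smul (le_of_lt (inv_pos.2 (by linarith))) hzC'
      rwa [← hgz] at hm
    · have hz0 : z = 0 := by
        have := hsplit
        rw [heq, one_smul] at this
        exact (add_eq_left.1 this.symm)
      have hterms : ∀ h ∈ H.erase g, (a h + b h) • h = 0 :=
        hzero _ _ (fun h hh => coneGen_smul (by linarith [ha h, hb h])
          (subset_coneGen ((hHsub (Finset.mem_coe.2 (Finset.mem_of_mem_erase hh))).1))) hz0
      have haterms : ∀ h ∈ H.erase g, a h • h = 0 := by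
        intro h hh
        have hsum0 : a h • h + b h • h = 0 := by
          rw [← add_smul]; exact hterms h hh
        have haC : a h • h ∈ C := coneGen_smul (ha h)
          (subset_coneGen ((hHsub (Finset.mem_coe.2 (Finset.mem_of_mem_erase hh))).1))
        have hbC : b h • h ∈ C := coneGen_smul (hb h)
          (subset_coneGen ((hHsub (Finset.mem_coe.2 (Finset.mem_of_mem_erase hh))).1))
        apply hsal _ haC
        have h3 : -(a h • h) = b h • h := neg_eq_of_add_eq_zero_right hsum0
        rw [h3]; exact hbC
      have hbterms : ∀ h ∈ H.erase g, b h • h = 0 := by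
        intro h hh
        have hsum0 : a h • h + b h • h = 0 := by
          rw [← add_smul]; exact hterms h hh
        rw [haterms h hh, zero_add] at hsum0
        exact hsum0
      constructor
      · refine ⟨a g, ha g, ?_⟩
        rw [hxa, ← Finset.add_sum_erase H _ hg, Finset.sum_eq_zero haterms, add_zero]
      · refine ⟨b g, hb g, ?_⟩
        rw [hyb, ← Finset.add_sum_erase H _ hg, Finset.sum_eq_zero hbterms, add_zero]
    · exfalso
      have hneg : -(((a g + b g) - 1) • g) = z := by
        rw [hzsub, sub_smul, one_smul, neg_sub]
      have hgC' : ((a g + b g) - 1) • g ∈ C := coneGen_smul (by linarith) hgC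
      have hz00 : ((a g + b g) - 1) • g = 0 := by
        apply hsal _ hgC'
        rw [hneg]; exact hzC
      rcases smul_eq_zero.1 hz00 with h | h
      · linarith
      · exact hg0 h
  -- choose the witness g
  obtain ⟨a₀, ha₀, hx₀sum⟩ := (mem_coneGen_finset_iff H).1 (hHgen.symm ▸ hx₀F)
  have hφsum : ∑ h ∈ H, a₀ h • φ h = s := by
    rw [← hx₀, hx₀sum, map_sum]
    simp [map_smul]
  obtain ⟨g, hg, hgne⟩ : ∃ h ∈ H, a₀ h • φ h ≠ 0 :=
    Finset.exists_ne_zero_of_sum_ne_zero (by rw [hφsum]; exact hs0)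
  have hφg : φ g ≠ 0 := fun h => hgne (by rw [h, smul_zero])
  obtain ⟨tg, htg, hφgeq⟩ := (hHsub (Finset.mem_coe.2 hg)).2.2
  have htgpos : 0 < tg := lt_of_le_of_ne htg (by
    rintro rfl
    exact hφg (by rw [hφgeq, zero_smul]))
  refine ⟨g, hext g hg, ?_⟩
  intro w hw t ht hwt
  apply hmiss w hw (t * tg) (mul_pos ht htgpos)
  rw [hwt, map_smul, hφgeq, smul_smul]
end
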